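/- Let γ : ℝ → ℝ be twice differentiable, and let X : [0, L] → ℝ² be a smooth arclength-parametrized curve with tangent angle θ(s) (so X′(s) = (cos θ(s), sin θ(s))), normal n(s) = (−sin θ(s), cos θ(s)) and curvature κ(s) = −θ′(s). Then for q ∈ {0,1} and any smooth S : ℝ → ℝ, the identity [γ(θ(s)) + γ″(θ(s))] κ(s) n(s) = − d/ds [ B_q(θ(s)) X′(s) ] holds, where B_q(θ) = G(θ)R(θ)^{1−q} + S(θ)·½(I − R(θ)). -/

import Mathlib

open Real Matrix

theorem anisotropic_conservative_form (L : ℝ) (γ S θ : ℝ → ℝ)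
    (hγ : ContDiff ℝ 2 γ) (hS : ContDiff ℝ (⊤ : ℕ∞) S) (hθ : ContDiff ℝ (⊤ : ℕ∞) θ)
    (κ : ℝ → ℝ) (hκ : ∀ s, κ s = -(deriv θ s))
    (q : ℕ) (hq : q = 0 ∨ q = 1)
    (B : ℝ → Matrix (Fin 2) (Fin 2) ℝ)
    (hB : ∀ φ : ℝ, B φ =
      !![γ φ, -(deriv γ φ); deriv γ φ, γ φ] *
        (!![Real.cos (2*φ), Real.sin (2*φ); Real.sin (2*φ), -Real.cos (2*φ)]) ^ (1 - q) +
      S φ • ((1/2 : ℝ) •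
        ((1 : Matrix (Fin 2) (Fin 2) ℝ) -
          !![Real.cos (2*φ), Real.sin (2*φ); Real.sin (2*φ), -Real.cos (2*φ)]))) :
    ∀ s ∈ Set.Icc 0 L,
      ((γ (θ s) + iteratedDeriv 2 γ (θ s)) * κ s) •
          (![-(Real.sin (θ s)), Real.cos (θ s)] : Fin 2 → ℝ) =
        -(deriv (fun u => (B (θ u)).mulVec ![Real.cos (θ u), Real.sin (θ u)]) s) := by
  intro s _
  -- step 1: rewrite the function
  have hfun : (fun u => (B (θ u)).mulVec ![Real.cos (θ u), Real.sin (θ u)]) =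
      fun u => (![γ (θ u) * Real.cos (θ u) - deriv γ (θ u) * Real.sin (θ u),
                 deriv γ (θ u) * Real.cos (θ u) + γ (θ u) * Real.sin (θ u)] : Fin 2 → ℝ) := by
    funext u
    set φ := θ u
    have key := sin_sq_add_cos_sq φ
    rcases hq with rfl | rfl <;>
      rw [hB] <;> ext i <;>
      fin_cases i <;>
        simp [Matrix.mulVec, dotProduct, Fin.sum_univ_two, Matrix.mul_apply,
          pow_one, pow_zero, Real.cos_two_mul, Real.sin_two_mul, Matrix.one_apply]
    · linear_combination ((2*γ φ - S φ) * Real.cos φ) * key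
    · linear_combination (2 * deriv γ φ * Real.cos φ) * key
    · linear_combination (-(S φ) * Real.cos φ) * key
    · ring
  rw [hfun]
  -- step 2: differentiability facts
  have hγ1 : ContDiff ℝ 1 (deriv γ) := by
    have h11 : ContDiff ℝ (1+1) γ := by
      rw [show ((1:WithTop ℕ∞)+1) = 2 by norm_num]; exact hγ
    exact (contDiff_succ_iff_deriv.mp h11).2.2
  have hγd : DifferentiableAt ℝ γ (θ s) := (hγ.differentiable (by norm_num)).differentiableAt
  have hγ'd : DifferentiableAt ℝ (deriv γ) (θ s) :=
    (hγ1.differentiable (by norm_num)).differentiableAt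
  have hθd : HasDerivAt θ (deriv θ s) s :=
    ((hθ.differentiable (by simp)).differentiableAt).hasDerivAt
  have h1 : HasDerivAt (fun u => γ (θ u)) (deriv γ (θ s) * deriv θ s) s :=
    (hγd.hasDerivAt).comp s hθd
  have h2 : HasDerivAt (fun u => deriv γ (θ u)) (deriv (deriv γ) (θ s) * deriv θ s) s :=
    (hγ'd.hasDerivAt).comp s hθd
  have hcos : HasDerivAt (fun u => Real.cos (θ u)) (-Real.sin (θ s) * deriv θ s) s :=
    (Real.hasDerivAt_cos (θ s)).comp s hθd
  have hsin : HasDerivAt (fun u => Real.sin (θ u)) (Real.cos (θ s) * deriv θ s) s :=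
    (Real.hasDerivAt_sin (θ s)).comp s hθd
  have h0 : HasDerivAt (fun u => γ (θ u) * Real.cos (θ u) - deriv γ (θ u) * Real.sin (θ u))
      ((deriv γ (θ s) * deriv θ s) * Real.cos (θ s) + γ (θ s) * (-Real.sin (θ s) * deriv θ s)
        - ((deriv (deriv γ) (θ s) * deriv θ s) * Real.sin (θ s)
          + deriv γ (θ s) * (Real.cos (θ s) * deriv θ s))) s :=
    (h1.mul hcos).sub (h2.mul hsin)
  have h3 : HasDerivAt (fun u => deriv γ (θ u) * Real.cos (θ u) + γ (θ u) * Real.sin (θ u))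
      ((deriv (deriv γ) (θ s) * deriv θ s) * Real.cos (θ s)
        + deriv γ (θ s) * (-Real.sin (θ s) * deriv θ s)
        + ((deriv γ (θ s) * deriv θ s) * Real.sin (θ s)
          + γ (θ s) * (Real.cos (θ s) * deriv θ s))) s :=
    (h2.mul hcos).add (h1.mul hsin)
  have hvec : HasDerivAt (fun u => (![γ (θ u) * Real.cos (θ u) - deriv γ (θ u) * Real.sin (θ u),
      deriv γ (θ u) * Real.cos (θ u) + γ (θ u) * Real.sin (θ u)] : Fin 2 → ℝ))
      (![(deriv γ (θ s) * deriv θ s) * Real.cos (θ s) + γ (θ s) * (-Real.sin (θ s) * deriv θ s)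
        - ((deriv (deriv γ) (θ s) * deriv θ s) * Real.sin (θ s)
          + deriv γ (θ s) * (Real.cos (θ s) * deriv θ s)),
        (deriv (deriv γ) (θ s) * deriv θ s) * Real.cos (θ s)
        + deriv γ (θ s) * (-Real.sin (θ s) * deriv θ s)
        + ((deriv γ (θ s) * deriv θ s) * Real.sin (θ s)
          + γ (θ s) * (Real.cos (θ s) * deriv θ s))] : Fin 2 → ℝ) s := by
    rw [hasDerivAt_pi]
    intro i
    fin_cases i
    · simpa using h0
    · simpa using h3
  rw [hvec.deriv]
  have h2it : iteratedDeriv 2 γ = deriv (deriv γ) := by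
    rw [show (2:ℕ) = 1+1 from rfl, iteratedDeriv_succ, iteratedDeriv_one]
  ext i
  fin_cases i <;> simp [h2it, hκ] <;> ring
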